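/- arXiv:2009.12512 — 7 statements merged into one kernel-verified Lean document; each statement's English description precedes it below -/
import Mathlib

section
/- There exists a constant c > 0 such that for every integer n > 1 and every real number p with p ≥ c·(n·log n)², every equilateral set in ℓ_p^n has cardinality at most 2(p+1)n. -/
/-- The ℓ_p distance on ℝ^n: `(∑ i, |x i - y i| ^ p) ^ (1/p)` (real exponents). -/
noncomputable def lpDist (p : ℝ) {n : ℕ} (x y : Fin n → ℝ) : ℝ :=
  (∑ i, |x i - y i| ^ p) ^ (1 / p)

/-- A finite set of points of ℝ^n is equilateral for the ℓ_p distance if all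
pairwise distances between distinct points equal a single positive value. -/
def IsEquilateral (p : ℝ) {n : ℕ} (S : Finset (Fin n → ℝ)) : Prop :=
  ∃ d : ℝ, 0 < d ∧ ∀ x ∈ S, ∀ y ∈ S, x ≠ y → lpDist p x y = d

/-!
Rescale the equilateral set to unit distance and write `p = 2 (N + θ)` with `N = ⌊p / 2⌋`.
On `[-1, 1]`, `|t| ^ p = (t ^ 2) ^ (N + θ)` is uniformly close, up to an error `δ`, to the
polynomial `P t = t ^ (2 N) ((1 - θ) + θ t ^ 2)` of degree `2 N + 2`. Since
`∑ j, |z x j - z y j| ^ p = 1` for distinct points, the matrix `1 - ∑ j, P (z x j - z y j)` has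
unit diagonal and off-diagonal entries at most `n δ`, so it is diagonally dominant, hence
nonsingular, as long as the set has fewer than `1 / (n δ)` points. Expanding `P (a - b)` in
powers of `a` shows that its rank is at most `n (2 N + 3) + 1`. For `p ≥ c (n log n) ^ 2` one can
make `δ < 1 / (2 n ^ 2 p)`, so no equilateral set has more than `n (2 N + 3) + 1 ≤ 2 (p + 1) n`
points.
-/

open Finset Polynomial Real

theorem Matrix.card_le_card_of_mul_near_one {ι κ 𝕜 : Type*} [Fintype ι] [DecidableEq ι]
    [Fintype κ] [NormedField 𝕜] (V : Matrix ι κ 𝕜) (W : Matrix κ ι 𝕜) {η : ℝ}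
    (hdiag : ∀ i, (V * W) i i = 1) (hoff : ∀ i j, i ≠ j → ‖(V * W) i j‖ ≤ η)
    (hη : ((Fintype.card ι : ℝ) - 1) * η < 1) :
    Fintype.card ι ≤ Fintype.card κ := by
  have hdet : (V * W).det ≠ 0 := by
    refine det_ne_zero_of_sum_row_lt_diag fun i => ?_
    have : Nonempty ι := ⟨i⟩
    calc ∑ j ∈ univ.erase i, ‖(V * W) i j‖
        ≤ (univ.erase i).card • η :=
          sum_le_card_nsmul _ _ _ fun j hj => hoff i j (ne_of_mem_erase hj).symm
      _ < ‖(V * W) i i‖ := by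
          rw [card_erase_of_mem (mem_univ i), card_univ, nsmul_eq_mul,
            Nat.cast_pred Fintype.card_pos, hdiag, norm_one]
          exact hη
  calc Fintype.card ι = (V * W).rank :=
        (Matrix.rank_of_isUnit _ ((Matrix.isUnit_iff_isUnit_det _).mpr hdet.isUnit)).symm
    _ ≤ V.rank := Matrix.rank_mul_le_left V W
    _ ≤ Fintype.card κ := V.rank_le_card_width

theorem Polynomial.eval_sub_eq_sum_range {R : Type*} [CommRing R] {P : R[X]} {m : ℕ}
    (hm : P.natDegree < m) (a b : R) :
    P.eval (a - b) = ∑ r ∈ range m, (taylor (-b) P).coeff r * a ^ r := by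
  rw [sub_eq_add_neg, ← taylor_eval, eval_eq_sum_range' (by rwa [natDegree_taylor])]

theorem exists_mul_eq_one_sub_sum_eval_sub {ι κ R : Type*} [Fintype κ] [CommRing R]
    {P : R[X]} {m : ℕ} (hm : P.natDegree < m) (z : ι → κ → R) :
    ∃ (V : Matrix ι (Option (κ × Fin m)) R) (W : Matrix (Option (κ × Fin m)) ι R),
      ∀ x y, (V * W) x y = 1 - ∑ j, P.eval (z x j - z y j) := by
  refine ⟨Matrix.of fun x k => k.elim 1 fun jr => z x jr.1 ^ (jr.2 : ℕ),
    Matrix.of fun k y => k.elim 1 fun jr => -(taylor (-z y jr.1) P).coeff jr.2, fun x y => ?_⟩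
  simp only [Matrix.mul_apply, Fintype.sum_option, Fintype.sum_prod_type, Matrix.of_apply,
    Option.elim, mul_one, mul_neg, sum_neg_distrib, ← sub_eq_add_neg, eval_sub_eq_sum_range hm]
  congr 1
  refine sum_congr rfl fun j _ => ?_
  rw [Fin.sum_univ_eq_sum_range (fun r => z x j ^ r * (taylor (-z y j) P).coeff r) m]
  exact sum_congr rfl fun r _ => mul_comm _ _

theorem card_le_of_one_sub_sum_eval_sub_le {ι κ 𝕜 : Type*} [Fintype ι] [DecidableEq ι]
    [Fintype κ] [NormedField 𝕜] {P : 𝕜[X]} {m : ℕ} (hm : P.natDegree < m)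
    (hP : P.eval 0 = 0) (z : ι → κ → 𝕜) {η : ℝ}
    (hoff : ∀ x y, x ≠ y → ‖1 - ∑ j, P.eval (z x j - z y j)‖ ≤ η)
    (hη : ((Fintype.card ι : ℝ) - 1) * η < 1) :
    Fintype.card ι ≤ Fintype.card κ * m + 1 := by
  obtain ⟨V, W, hVW⟩ := exists_mul_eq_one_sub_sum_eval_sub hm z
  have := Matrix.card_le_card_of_mul_near_one V W (fun x => by simp [hVW, hP])
    (fun x y hxy => hVW x y ▸ hoff x y hxy) hη
  simpa using this

theorem abs_one_sub_rpow_sub_le {θ v : ℝ} (hθ0 : 0 ≤ θ) (hθ1 : θ ≤ 1)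
    (hv : v ≤ 1 / 2) : |(1 - v) ^ θ - (1 - θ * v)| ≤ 2 * v ^ 2 := by
  have hpos : 0 < 1 - v := by linarith
  have hbernoulli : (1 - v) ^ θ ≤ 1 - θ * v := by
    simpa [sub_eq_add_neg] using
      rpow_one_add_le_one_add_mul_self (by linarith : -1 ≤ -v) hθ0 hθ1
  have hlog : -(v + 2 * v ^ 2) ≤ log (1 - v) := by
    have h := one_sub_inv_le_log_of_pos hpos
    have : v / (1 - v) ≤ v + 2 * v ^ 2 := by
      rw [div_le_iff₀ hpos]; nlinarith
    have : 1 - (1 - v)⁻¹ = -(v / (1 - v)) := by field_simp; ring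
    linarith
  have hexp : 1 - θ * v - 2 * v ^ 2 ≤ (1 - v) ^ θ := by
    rw [rpow_def_of_pos hpos]
    nlinarith [add_one_le_exp (log (1 - v) * θ), mul_le_mul_of_nonneg_left hlog hθ0,
      mul_le_of_le_one_left (sq_nonneg v) hθ1]
  rw [abs_le]
  constructor <;> nlinarith

/-- Bounds the error of `u ^ (N + θ) ≈ u ^ N ((1 - θ) + θ u)` on `[0, 1]`: the second term
bounds it on `[0, 1 - ε]`, the first near `u = 1`. -/
noncomputable def interpError (N : ℕ) (ε : ℝ) : ℝ :=
  2 * ε ^ 2 + (1 - ε) ^ N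

theorem interpError_nonneg (N : ℕ) {ε : ℝ} (hε : ε ≤ 1) : 0 ≤ interpError N ε := by
  have : 0 ≤ 1 - ε := by linarith
  unfold interpError
  positivity

theorem abs_rpow_sub_pow_mul_le_interpError {u θ ε : ℝ} (N : ℕ) (hu0 : 0 ≤ u)
    (hu1 : u ≤ 1) (hθ0 : 0 ≤ θ) (hθ1 : θ ≤ 1) (hε : ε ≤ 1 / 2) :
    |u ^ ((N : ℝ) + θ) - u ^ N * (1 - θ * (1 - u))| ≤ interpError N ε := by
  unfold interpError
  rw [rpow_add_of_nonneg hu0 N.cast_nonneg hθ0, rpow_natCast, ← mul_sub, abs_mul,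
    abs_of_nonneg (pow_nonneg hu0 N)]
  rcases le_or_gt u (1 - ε) with hsmall | hlarge
  · have hgap : |u ^ θ - (1 - θ * (1 - u))| ≤ 1 := by
      rw [abs_sub_le_iff]
      constructor <;> nlinarith [rpow_nonneg hu0 θ, rpow_le_one hu0 hu1 hθ0]
    calc u ^ N * |u ^ θ - (1 - θ * (1 - u))| ≤ (1 - ε) ^ N * 1 :=
          mul_le_mul (pow_le_pow_left₀ hu0 hsmall N) hgap (abs_nonneg _)
            (pow_nonneg (by linarith) N)
      _ ≤ 2 * ε ^ 2 + (1 - ε) ^ N := by nlinarith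
  · have hgap := abs_one_sub_rpow_sub_le hθ0 hθ1 (by linarith : 1 - u ≤ 1 / 2)
    rw [sub_sub_cancel] at hgap
    calc u ^ N * |u ^ θ - (1 - θ * (1 - u))| ≤ 1 * (2 * (1 - u) ^ 2) :=
          mul_le_mul (pow_le_one₀ hu0 hu1) hgap (abs_nonneg _) zero_le_one
      _ ≤ 2 * ε ^ 2 + (1 - ε) ^ N := by
          nlinarith [pow_nonneg (by linarith : (0 : ℝ) ≤ 1 - ε) N]

noncomputable def rpowInterpPoly (N : ℕ) (θ : ℝ) : ℝ[X] :=
  X ^ (2 * N) * (C (1 - θ) + C θ * X ^ 2)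

theorem natDegree_rpowInterpPoly_lt (N : ℕ) (θ : ℝ) :
    (rpowInterpPoly N θ).natDegree < 2 * N + 3 := by
  have : (rpowInterpPoly N θ).natDegree ≤ 2 * N + 2 := by
    unfold rpowInterpPoly; compute_degree
  omega

theorem rpowInterpPoly_eval_zero {N : ℕ} (hN : N ≠ 0) (θ : ℝ) :
    (rpowInterpPoly N θ).eval 0 = 0 := by
  simp [rpowInterpPoly, hN]

theorem abs_abs_rpow_sub_rpowInterpPoly_eval_le_interpError {t θ ε : ℝ} (N : ℕ)
    (ht : |t| ≤ 1) (hθ0 : 0 ≤ θ) (hθ1 : θ ≤ 1) (hε : ε ≤ 1 / 2) :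
    |(|t| ^ (2 * ((N : ℝ) + θ))) - (rpowInterpPoly N θ).eval t| ≤ interpError N ε := by
  have hsq : |t| ^ (2 * ((N : ℝ) + θ)) = (t ^ 2) ^ ((N : ℝ) + θ) := by
    rw [rpow_mul (abs_nonneg t), rpow_two, sq_abs]
  have heval : (rpowInterpPoly N θ).eval t = (t ^ 2) ^ N * (1 - θ * (1 - t ^ 2)) := by
    simp only [rpowInterpPoly, eval_mul, eval_pow, eval_X, eval_add, eval_C, pow_mul]
    ring
  rw [hsq, heval]
  exact abs_rpow_sub_pow_mul_le_interpError N (sq_nonneg t)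
    (by nlinarith [abs_nonneg t, sq_abs t]) hθ0 hθ1 hε

theorem IsEquilateral.mono {p : ℝ} {n : ℕ} {S T : Finset (Fin n → ℝ)}
    (hS : IsEquilateral p S) (hTS : T ⊆ S) : IsEquilateral p T := by
  obtain ⟨d, hd, hdist⟩ := hS
  exact ⟨d, hd, fun x hx y hy => hdist x (hTS hx) y (hTS hy)⟩

theorem IsEquilateral.exists_sum_rpow_eq_one {p : ℝ} {n : ℕ} {S : Finset (Fin n → ℝ)}
    (hS : IsEquilateral p S) (hp : p ≠ 0) :
    ∃ z : S → Fin n → ℝ, ∀ x y, x ≠ y → ∑ j, |z x j - z y j| ^ p = 1 := by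
  obtain ⟨d, hd, hdist⟩ := hS
  refine ⟨fun x => d⁻¹ • (x : Fin n → ℝ), fun x y hxy => ?_⟩
  have hsum : ∑ j, |(x : Fin n → ℝ) j - (y : Fin n → ℝ) j| ^ p = d ^ p := by
    rw [← hdist x x.2 y y.2 (Subtype.coe_injective.ne hxy), lpDist,
      ← rpow_mul (sum_nonneg fun j _ => rpow_nonneg (abs_nonneg _) p), one_div,
      inv_mul_cancel₀ hp, rpow_one]
  simp only [Pi.smul_apply, smul_eq_mul, ← mul_sub, abs_mul, abs_inv, abs_of_pos hd,
    mul_rpow (inv_nonneg.mpr hd.le) (abs_nonneg _), ← mul_sum, inv_rpow hd.le]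
  rw [hsum, inv_mul_cancel₀ (rpow_pos_of_pos hd p).ne']

theorem abs_le_one_of_sum_rpow_eq_one {ι : Type*} [Fintype ι] {p : ℝ} (hp : 0 < p)
    {a : ι → ℝ} (h : ∑ j, |a j| ^ p = 1) (j : ι) : |a j| ≤ 1 := by
  by_contra! hj
  have hle : |a j| ^ p ≤ ∑ j, |a j| ^ p :=
    single_le_sum (fun j _ => rpow_nonneg (abs_nonneg (a j)) p) (mem_univ j)
  linarith [one_lt_rpow hj hp]

theorem IsEquilateral.card_le_of_card_mul_interpError_lt_one {p θ ε : ℝ} {N n : ℕ}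
    {S : Finset (Fin n → ℝ)} (hS : IsEquilateral p S) (hp : p = 2 * (N + θ)) (hN : N ≠ 0)
    (hθ0 : 0 ≤ θ) (hθ1 : θ ≤ 1) (hε : ε ≤ 1 / 2)
    (hsmall : ((S.card : ℝ) - 1) * (n * interpError N ε) < 1) :
    S.card ≤ n * (2 * N + 3) + 1 := by
  classical
  have hp0 : 0 < p := by
    have : (1 : ℝ) ≤ N := by exact_mod_cast Nat.one_le_iff_ne_zero.mpr hN
    rw [hp]; positivity
  obtain ⟨z, hz⟩ := hS.exists_sum_rpow_eq_one hp0.ne'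
  have hoff : ∀ x y, x ≠ y →
      ‖1 - ∑ j, (rpowInterpPoly N θ).eval (z x j - z y j)‖ ≤ n * interpError N ε := by
    intro x y hxy
    rw [Real.norm_eq_abs]
    nth_rw 1 [← hz x y hxy]
    rw [← sum_sub_distrib]
    refine (abs_sum_le_sum_abs _ _).trans ?_
    refine (sum_le_card_nsmul univ _ (interpError N ε) fun j _ => ?_).trans_eq
      (by rw [card_univ, Fintype.card_fin, nsmul_eq_mul])
    rw [hp]
    exact abs_abs_rpow_sub_rpowInterpPoly_eval_le_interpError N
      (abs_le_one_of_sum_rpow_eq_one hp0 (hz x y hxy) j) hθ0 hθ1 hε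
  simpa using card_le_of_one_sub_sum_eval_sub_le (natDegree_rpowInterpPoly_lt N θ)
    (rpowInterpPoly_eval_zero hN θ) z hoff (by simpa using hsmall)

theorem IsEquilateral.card_le_of_interpError {p θ ε : ℝ} {N n : ℕ}
    {S : Finset (Fin n → ℝ)} (hS : IsEquilateral p S) (hp : p = 2 * (N + θ)) (hN : N ≠ 0)
    (hθ0 : 0 ≤ θ) (hθ1 : θ ≤ 1) (hε : ε ≤ 1 / 2)
    (hsmall : ((n * (2 * N + 3) + 1 : ℕ) : ℝ) * (n * interpError N ε) < 1) :
    S.card ≤ n * (2 * N + 3) + 1 := by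
  by_contra! hlarge
  obtain ⟨T, hTS, hT⟩ := exists_subset_card_eq hlarge
  have := (hS.mono hTS).card_le_of_card_mul_interpError_lt_one hp hN hθ0 hθ1 hε
    (by rwa [hT, Nat.cast_succ, add_sub_cancel_right])
  omega

theorem one_le_mul_log {x : ℝ} (hx : 2 ≤ x) : 1 ≤ x * log x := by
  nlinarith [log_le_log (by norm_num) hx, log_two_gt_d9]

theorem log_le_sqrt_div_of_sq_mul_log_le {n p : ℝ} (hn : 2 ≤ n)
    (hp : 2 ^ 18 * (n * log n) ^ 2 ≤ p) :
    log (4 * n ^ 2 * p) ≤ √p / (16 * n) := by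
  have hL : log 2 ≤ log n := log_le_log (by norm_num) hn
  have hlog2 := log_two_lt_d9
  have hn0 : 0 < n := by linarith
  have hs : 2 ^ 9 * n * log n ≤ √p := le_sqrt_of_sq_le (by linarith)
  have hs0 : 0 < √p := by nlinarith [log_two_gt_d9]
  have hlog_s : log √p ≤ √p / (64 * n) - 1 + log 64 + log n := by
    have h := log_le_sub_one_of_pos (by positivity : 0 < √p / (64 * n))
    rw [log_div hs0.ne' (by positivity), log_mul (by norm_num) hn0.ne'] at h
    linarith
  have hsplit : log (4 * n ^ 2 * p) = 2 * log 2 + 2 * log n + 2 * log √p := by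
    have hp0 : 0 < p := sqrt_pos.mp hs0
    rw [log_mul (by positivity) hp0.ne', log_mul (by norm_num) (by positivity), log_pow,
      show (4 : ℝ) = 2 ^ 2 by norm_num, log_pow, log_sqrt hp0.le]
    push_cast; ring
  have h64 : log 64 = 6 * log 2 := by
    rw [show (64 : ℝ) = 2 ^ 6 by norm_num, log_pow]; push_cast; ring
  have hdiv : 16 * log n ≤ √p / (32 * n) := by
    rw [le_div_iff₀ (by positivity)]; nlinarith
  have hdiv16 : √p / (16 * n) = 2 * (√p / (32 * n)) := by field_simp; ring
  have hdiv64 : √p / (64 * n) = (√p / (32 * n)) / 2 := by field_simp; ring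
  linarith

theorem mul_interpError_lt_one {n p : ℝ} {N : ℕ} (hn : 2 ≤ n)
    (hp : 2 ^ 18 * (n * log n) ^ 2 ≤ p) (hN : p / 4 ≤ N) :
    2 * n ^ 2 * p * interpError N (1 / (4 * n * √p)) < 1 := by
  have hn0 : 0 < n := by linarith
  have hp1 : 1 ≤ p := by nlinarith [one_le_mul_log hn]
  have hp0 : 0 < p := by linarith
  have hs0 : 0 < √p := sqrt_pos.mpr hp0
  set ε := 1 / (4 * n * √p)
  have hexponent : log (4 * n ^ 2 * p) ≤ N * ε := by
    refine (log_le_sqrt_div_of_sq_mul_log_le hn hp).trans ?_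
    calc √p / (16 * n) = p / 4 * ε := by
          simp only [ε]; field_simp; rw [sq_sqrt hp0.le]; ring
      _ ≤ N * ε := by gcongr
  have htail : (1 - ε) ^ N ≤ (4 * n ^ 2 * p)⁻¹ :=
    calc (1 - ε) ^ N ≤ exp (-ε) ^ N := by
          gcongr
          · rw [sub_nonneg, div_le_one (by positivity)]
            nlinarith [one_le_sqrt.mpr hp1]
          · linarith [add_one_le_exp (-ε)]
      _ = exp (-(N * ε)) := by rw [← exp_nat_mul]; ring_nf
      _ ≤ exp (-log (4 * n ^ 2 * p)) := by gcongr
      _ = (4 * n ^ 2 * p)⁻¹ := by rw [exp_neg, exp_log (by positivity)]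
  have hquad : 2 * n ^ 2 * p * (2 * ε ^ 2) = 1 / 4 := by
    simp only [ε]; field_simp; rw [sq_sqrt hp0.le]; ring
  calc 2 * n ^ 2 * p * interpError N ε
      ≤ 2 * n ^ 2 * p * (2 * ε ^ 2) + 2 * n ^ 2 * p * (4 * n ^ 2 * p)⁻¹ := by
        rw [interpError, mul_add]; gcongr
    _ < 1 := by
        rw [hquad, show 2 * n ^ 2 * p * (4 * n ^ 2 * p)⁻¹ = 1 / 2 by field_simp; ring]
        norm_num

theorem equilateral_lp_large_p :
    ∃ c : ℝ, 0 < c ∧ ∀ n : ℕ, 1 < n → ∀ p : ℝ,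
      c * ((n : ℝ) * Real.log n) ^ 2 ≤ p →
      ∀ S : Finset (Fin n → ℝ), IsEquilateral p S →
        (S.card : ℝ) ≤ 2 * (p + 1) * n := by
  refine ⟨2 ^ 18, by norm_num, fun n hn p hp S hS => ?_⟩
  have hn2 : (2 : ℝ) ≤ n := by exact_mod_cast hn
  have hp4 : 4 ≤ p := by nlinarith [one_le_mul_log hn2]
  set N := ⌊p / 2⌋₊
  have hNp : (N : ℝ) ≤ p / 2 := Nat.floor_le (by linarith)
  have hpN : p / 2 < N + 1 := Nat.lt_floor_add_one (p / 2)
  set ε := 1 / (4 * n * √p)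
  have hε : ε ≤ 1 / 2 :=
    one_div_le_one_div_of_le two_pos (by nlinarith [one_le_sqrt.mpr (by linarith : 1 ≤ p)])
  have hdim : ((n * (2 * N + 3) + 1 : ℕ) : ℝ) ≤ 2 * n * p := by push_cast; nlinarith
  have hcard := hS.card_le_of_interpError (θ := p / 2 - N) (by ring)
    (Nat.floor_pos.mpr (by linarith)).ne' (by linarith) (by linarith) hε <|
    calc _ ≤ 2 * n * p * (n * interpError N ε) := mul_le_mul_of_nonneg_right hdim <|
          mul_nonneg n.cast_nonneg <| interpError_nonneg N (by linarith)
      _ = 2 * n ^ 2 * p * interpError N ε := by ring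
      _ < 1 := mul_interpError_lt_one hn2 hp (by linarith)
  calc (S.card : ℝ) ≤ ((n * (2 * N + 3) + 1 : ℕ) : ℝ) := by exact_mod_cast hcard
    _ ≤ 2 * (p + 1) * n := by push_cast; nlinarith
end

section
/- For all positive integers a and b, every equilateral set in the ℓ_∞ sum E^a ⊕_∞ E^b of Euclidean spaces E^a and E^b has cardinality at most (a+1)(b+1)+1. -/
/-!
For points `p = (x, y)`, `q = (x', y')` of an equilateral set with distance `d`, the number
`(d² - ‖x - x'‖²) (d² - ‖y - y'‖²)` is `0` when `p ≠ q`, because `d` is the larger of the two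
distances, and `d⁴` when `p = q`. Expanding the product writes it as `F p q + F q p` with
`F p q = φ p ⬝ᵥ ψ q` for explicit vectors `φ p, ψ q ∈ ℝ^(ab + a + b + 2)`. A matrix whose
symmetric part is a positive diagonal matrix is nonsingular, so the vectors `ψ p` are linearly
independent and there are at most `ab + a + b + 2 = (a + 1)(b + 1) + 1` of them.
-/

open Matrix

section Pairing

variable {ι K V W : Type*} [Fintype ι] [Field K] [LinearOrder K] [IsStrictOrderedRing K]
  [AddCommGroup V] [Module K V] [AddCommGroup W] [Module K W]

/-- A relation `∑ g i • ψ i = 0` kills the quadratic form `∑ g i g j B (φ i) (ψ j)`, and with it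
its symmetrization `2 ∑ g i ^ 2 B (φ i) (ψ i)`. -/
theorem linearIndependent_of_pairing_add_swap (B : V →ₗ[K] W →ₗ[K] K) (φ : ι → V) (ψ : ι → W)
    (h_off : ∀ i j, i ≠ j → B (φ i) (ψ j) + B (φ j) (ψ i) = 0)
    (h_diag : ∀ i, 0 < B (φ i) (ψ i)) : LinearIndependent K ψ := by
  classical
  rw [Fintype.linearIndependent_iff]
  intro g hg
  have h_row : ∀ i, ∑ j, g j * B (φ i) (ψ j) = 0 := fun i => by
    simpa [map_sum, map_smul] using congrArg (B (φ i)) hg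
  have h_quad : ∑ i, ∑ j, g i * g j * B (φ i) (ψ j) = 0 :=
    Finset.sum_eq_zero fun i _ => by simp_rw [mul_assoc, ← Finset.mul_sum, h_row, mul_zero]
  have h_quad_swap : ∑ i, ∑ j, g i * g j * B (φ j) (ψ i) = 0 := by
    rw [Finset.sum_comm]
    exact (Finset.sum_congr rfl fun _ _ => Finset.sum_congr rfl fun _ _ => by ring).trans h_quad
  have h_symm : ∑ i, ∑ j, g i * g j * (B (φ i) (ψ j) + B (φ j) (ψ i))
      = 2 * ∑ i, g i ^ 2 * B (φ i) (ψ i) := by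
    rw [Finset.mul_sum]
    refine Finset.sum_congr rfl fun i _ => ?_
    rw [Finset.sum_eq_single i (fun j _ hji => by rw [h_off i j (Ne.symm hji), mul_zero])
      (by simp)]
    ring
  have h_sum : ∑ i, g i ^ 2 * B (φ i) (ψ i) = 0 := by
    have h_zero : ∑ i, ∑ j, g i * g j * (B (φ i) (ψ j) + B (φ j) (ψ i)) = 0 := by
      simp_rw [mul_add, Finset.sum_add_distrib, h_quad, h_quad_swap, add_zero]
    linarith
  intro i
  have h_term := (Finset.sum_eq_zero_iff_of_nonneg fun j _ => by
    have := h_diag j; positivity).1 h_sum i (Finset.mem_univ i)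
  simpa [(h_diag i).ne'] using h_term

end Pairing

def tensorVec {m n R : Type*} [Mul R] (u : m → R) (v : n → R) : m × n → R :=
  fun kl => u kl.1 * v kl.2

theorem tensorVec_dotProduct_tensorVec {m n R : Type*} [Fintype m] [Fintype n] [CommSemiring R]
    (u u' : m → R) (v v' : n → R) :
    tensorVec u v ⬝ᵥ tensorVec u' v' = (u ⬝ᵥ u') * (v ⬝ᵥ v') := by
  simp only [dotProduct, Fintype.sum_prod_type, Finset.sum_mul_sum, tensorVec]
  exact Finset.sum_congr rfl fun _ _ => Finset.sum_congr rfl fun _ _ => by ring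

theorem EuclideanSpace.ofLp_dotProduct_ofLp {ι : Type*} [Fintype ι] (x y : EuclideanSpace ℝ ι) :
    x.ofLp ⬝ᵥ y.ofLp = inner ℝ x y := by
  simp [EuclideanSpace.inner_eq_star_dotProduct, dotProduct_comm]

theorem sq_sub_dist_fst_mul_sq_sub_dist_snd_eq_zero {X Y : Type*} [PseudoMetricSpace X]
    [PseudoMetricSpace Y] {p q : X × Y} {d : ℝ} (h : dist p q = d) :
    (d ^ 2 - dist p.1 q.1 ^ 2) * (d ^ 2 - dist p.2 q.2 ^ 2) = 0 := by
  rw [← h, Prod.dist_eq]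
  rcases max_choice (dist p.1 q.1) (dist p.2 q.2) with h | h <;> rw [h] <;> ring

namespace EquilateralLift

local notation "E" n => EuclideanSpace ℝ (Fin n)

variable {a b : ℕ} (d : ℝ)

abbrev Index (a b : ℕ) := (Fin a × Fin b) ⊕ Fin a ⊕ Fin b ⊕ Fin 2

noncomputable def gap {n : ℕ} (x : E n) : ℝ := d ^ 2 / 2 - ‖x‖ ^ 2

/- `d² - ‖x - x'‖² = gap d x + gap d x' + 2 ⟪x, x'⟫`; multiplying out two such factors and
splitting the nine terms into a term `F p q` and its swap `F q p` gives `left` and `right`. -/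
noncomputable def left (p : (E a) × E b) : Index a b → ℝ :=
  Sum.elim (2 • tensorVec p.1.ofLp p.2.ofLp)
    (Sum.elim ((2 * gap d p.2) • p.1.ofLp)
      (Sum.elim ((2 * gap d p.1) • p.2.ofLp) ![gap d p.1 * gap d p.2, gap d p.1]))

noncomputable def right (q : (E a) × E b) : Index a b → ℝ :=
  Sum.elim (tensorVec q.1.ofLp q.2.ofLp)
    (Sum.elim q.1.ofLp (Sum.elim q.2.ofLp ![1, gap d q.2]))

theorem left_dotProduct_right (p q : (E a) × E b) :
    left d p ⬝ᵥ right d q = 2 * (inner ℝ p.1 q.1 * inner ℝ p.2 q.2)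
      + 2 * gap d p.2 * inner ℝ p.1 q.1 + 2 * gap d p.1 * inner ℝ p.2 q.2
      + gap d p.1 * gap d p.2 + gap d p.1 * gap d q.2 := by
  simp only [left, right, sumElim_dotProduct_sumElim, smul_dotProduct,
    tensorVec_dotProduct_tensorVec, EuclideanSpace.ofLp_dotProduct_ofLp, cons_dotProduct_cons,
    dotProduct_of_isEmpty, smul_eq_mul]
  ring

theorem left_dotProduct_right_add_swap (p q : (E a) × E b) :
    left d p ⬝ᵥ right d q + left d q ⬝ᵥ right d p
      = (d ^ 2 - dist p.1 q.1 ^ 2) * (d ^ 2 - dist p.2 q.2 ^ 2) := by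
  simp only [left_dotProduct_right, gap]
  rw [dist_eq_norm, dist_eq_norm, norm_sub_sq_real, norm_sub_sq_real, real_inner_comm q.1,
    real_inner_comm q.2]
  ring

theorem left_dotProduct_right_self (p : (E a) × E b) :
    left d p ⬝ᵥ right d p = d ^ 4 / 2 := by
  have h := left_dotProduct_right_add_swap d p p
  rw [dist_self, dist_self] at h
  linarith

end EquilateralLift

open EquilateralLift in
theorem equilateral_linfty_sum_general (a b : ℕ)
    (S : Finset (EuclideanSpace ℝ (Fin a) × EuclideanSpace ℝ (Fin b)))
    (hS : ∃ d : ℝ, 0 < d ∧ ∀ x ∈ S, ∀ y ∈ S, x ≠ y → dist x y = d) :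
    S.card ≤ (a + 1) * (b + 1) + 1 := by
  obtain ⟨d, hd, hSd⟩ := hS
  have h_indep : LinearIndependent ℝ (fun p : S => right d p.1) := by
    refine linearIndependent_of_pairing_add_swap (dotProductBilin ℝ ℝ)
      (fun p : S => left d p.1) _ (fun p q hpq => ?_) (fun p => ?_)
    · have h_dist := hSd p.1 p.2 q.1 q.2 (Subtype.coe_ne_coe.mpr hpq)
      simp only [dotProductBilin_apply_apply, left_dotProduct_right_add_swap]
      exact sq_sub_dist_fst_mul_sq_sub_dist_snd_eq_zero h_dist
    · simp only [dotProductBilin_apply_apply, left_dotProduct_right_self]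
      positivity
  have h_card := h_indep.fintype_card_le_finrank
  simp only [Fintype.card_coe, Module.finrank_fintype_fun_eq_card, Fintype.card_sum,
    Fintype.card_prod, Fintype.card_fin] at h_card
  linarith

/-- Note: the product of two metric spaces in Mathlib carries the sup (ℓ_∞) distance,
so `EuclideanSpace ℝ (Fin a) × EuclideanSpace ℝ (Fin b)` is exactly the ℓ_∞ sum
`E^a ⊕_∞ E^b`: `dist x y = max (dist x.1 y.1) (dist x.2 y.2)`. -/
theorem equilateral_linfty_sum (a b : ℕ) (ha : 0 < a) (hb : 0 < b)
    (S : Finset (EuclideanSpace ℝ (Fin a) × EuclideanSpace ℝ (Fin b)))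
    (hS : ∃ d : ℝ, 0 < d ∧ ∀ x ∈ S, ∀ y ∈ S, x ≠ y → dist x y = d) :
    S.card ≤ (a + 1) * (b + 1) + 1 :=
  equilateral_linfty_sum_general a b S hS
end

section
/- For all positive integers a and b and every positive even integer p, every equilateral set in the ℓ_p sum E^a ⊕_p E^b of Euclidean spaces E^a and E^b has cardinality at most C(a + p/2, a) + C(b + p/2, b), where C(·,·) denotes the binomial coefficient. -/
/-!
Let `S` be equilateral with distance `d` and `p = 2k`. The kernel
`K x y = ‖x₁ - y₁‖^(2k) + ‖x₂ - y₂‖^(2k)` on `S` equals `d^p` off the diagonal and `0` on it.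
Each summand is a polynomial of degree `2k` in the pair of points, so each of its monomials has
degree at most `k` in one of the two points. Hence, for weights `w` on `S` orthogonal to all
monomials of degree `≤ k` in the first and in the second coordinates, `∑ w x w y K x y = 0`; but
this sum is `d^p ((∑ w)² - ∑ w²) = -d^p ∑ w²`, so `w = 0`. Thus the moment map from `ℝ^S` to the
two spaces of polynomials of degree `≤ k`, of dimensions `C(a + k, a)` and `C(b + k, b)`, is
injective, which bounds `#S` by the sum of these dimensions.
-/

/-- The ℓ_p-sum distance on the product of two Euclidean spaces:
`((dist x₁ y₁)^p + (dist x₂ y₂)^p)^(1/p)`. -/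
noncomputable def lpSumDist (p : ℕ) {a b : ℕ}
    (x y : EuclideanSpace ℝ (Fin a) × EuclideanSpace ℝ (Fin b)) : ℝ :=
  (dist x.1 y.1 ^ p + dist x.2 y.2 ^ p) ^ (1 / (p : ℝ))

open MvPolynomial

section

variable {σ ι : Type*} [Fintype σ] [Fintype ι]

def monomialEval (α : σ → ℕ) (x : σ → ℝ) : ℝ := ∏ i, x i ^ α i

def AnnihilatesMonomials (k : ℕ) (u : ι → σ → ℝ) (w : ι → ℝ) : Prop :=
  ∀ α : σ → ℕ, ∑ i, α i ≤ k → ∑ x, w x * monomialEval α (u x) = 0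

lemma eval_sumElim_monomial (m : σ ⊕ σ →₀ ℕ) (c : ℝ) (x y : σ → ℝ) :
    eval (Sum.elim x y) (monomial m c) =
      c * monomialEval (m ∘ Sum.inl) x * monomialEval (m ∘ Sum.inr) y := by
  rw [eval_monomial, Finsupp.prod_fintype _ _ fun _ => pow_zero _, Fintype.prod_sum_type,
    mul_assoc]
  rfl

theorem sum_sum_mul_eval_sumElim_eq_zero {k : ℕ} {u : ι → σ → ℝ} {w : ι → ℝ}
    (hw : AnnihilatesMonomials k u w) {Q : MvPolynomial (σ ⊕ σ) ℝ} (hQ : Q.totalDegree ≤ 2 * k) :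
    ∑ x, ∑ y, w x * w y * eval (Sum.elim (u x) (u y)) Q = 0 := by
  have hsplit : ∀ x y, w x * w y * eval (Sum.elim (u x) (u y)) Q = ∑ m ∈ Q.support,
      coeff m Q * (w x * monomialEval (m ∘ Sum.inl) (u x)) *
        (w y * monomialEval (m ∘ Sum.inr) (u y)) := by
    intro x y
    conv_lhs => rw [Q.as_sum]
    simp only [map_sum, eval_sumElim_monomial, Finset.mul_sum]
    exact Finset.sum_congr rfl fun _ _ => by ring
  simp only [hsplit]
  rw [Finset.sum_congr rfl fun x _ => Finset.sum_comm, Finset.sum_comm]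
  refine Finset.sum_eq_zero fun m hm => ?_
  simp only [← Finset.sum_mul, ← Finset.mul_sum]
  have hdeg : ∑ i, m (Sum.inl i) + ∑ i, m (Sum.inr i) ≤ 2 * k := by
    rw [← Fintype.sum_sum_type, ← Finsupp.degree_eq_sum]
    exact (le_totalDegree hm).trans hQ
  rcases le_or_gt (∑ i, m (Sum.inl i)) k with h | h
  · rw [hw (m ∘ Sum.inl) h, mul_zero, zero_mul]
  · rw [hw (m ∘ Sum.inr) (by simp only [Function.comp_apply]; omega), mul_zero]

noncomputable def sqDistPoly (σ : Type*) [Fintype σ] : MvPolynomial (σ ⊕ σ) ℝ :=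
  ∑ i, (X (Sum.inl i) - X (Sum.inr i)) ^ 2

lemma isHomogeneous_sqDistPoly : (sqDistPoly σ).IsHomogeneous 2 :=
  IsHomogeneous.sum _ _ _ fun i _ => by
    simpa using ((isHomogeneous_X ℝ (Sum.inl i)).sub (isHomogeneous_X ℝ (Sum.inr i))).pow 2

lemma eval_sqDistPoly (x y : σ → ℝ) :
    eval (Sum.elim x y) (sqDistPoly σ) = ∑ i, (x i - y i) ^ 2 := by
  simp [sqDistPoly]

lemma dist_sq_eq_sum (x y : EuclideanSpace ℝ σ) : dist x y ^ 2 = ∑ i, (x i - y i) ^ 2 := by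
  rw [EuclideanSpace.dist_eq, Real.sq_sqrt (by positivity)]
  simp only [Real.dist_eq, sq_abs]

theorem sum_sum_mul_dist_pow_eq_zero {k : ℕ} {u : ι → EuclideanSpace ℝ σ} {w : ι → ℝ}
    (hw : AnnihilatesMonomials k (fun x => (u x).ofLp) w) :
    ∑ x, ∑ y, w x * w y * dist (u x) (u y) ^ (2 * k) = 0 := by
  simpa only [map_pow, eval_sqDistPoly, pow_mul, dist_sq_eq_sum] using
    sum_sum_mul_eval_sumElim_eq_zero hw (isHomogeneous_sqDistPoly.pow k).totalDegree_le

variable [DecidableEq σ]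

/-- A monomial of degree `k` in the variables `Option σ` dehomogenizes, at `none = 1`, to a
monomial of degree `≤ k` in `σ`. -/
def Sym.exponent {k : ℕ} (s : Sym (Option σ) k) : σ → ℕ := fun i => Multiset.count (some i) s

lemma Sym.exists_exponent_eq {k : ℕ} {α : σ → ℕ} (hα : ∑ i, α i ≤ k) :
    ∃ s : Sym (Option σ) k, s.exponent = α := by
  refine ⟨(Sym.equivNatSumOfFintype _ k).symm ⟨fun o => o.elim (k - ∑ i, α i) α, ?_⟩, ?_⟩
  · simp only [Fintype.sum_option, Option.elim_none, Option.elim_some]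
    omega
  · ext i
    rw [Sym.exponent, ← Sym.coe_equivNatSumOfFintype_apply_apply, Equiv.apply_symm_apply]
    rfl

noncomputable def momentMap (k : ℕ) (u : ι → σ → ℝ) : (ι → ℝ) →ₗ[ℝ] (Sym (Option σ) k → ℝ) :=
  Fintype.linearCombination ℝ fun x s => monomialEval s.exponent (u x)

lemma annihilatesMonomials_of_momentMap_eq_zero {k : ℕ} {u : ι → σ → ℝ} {w : ι → ℝ}
    (hw : momentMap k u w = 0) : AnnihilatesMonomials k u w := by
  intro α hα
  obtain ⟨s, rfl⟩ := Sym.exists_exponent_eq hα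
  simpa [momentMap, Fintype.linearCombination_apply] using congrFun hw s

theorem card_le_of_annihilatesMonomials {τ : Type*} [Fintype τ] [DecidableEq τ] (k : ℕ)
    (u : ι → σ → ℝ) (v : ι → τ → ℝ)
    (h : ∀ w, AnnihilatesMonomials k u w → AnnihilatesMonomials k v w → w = 0) :
    Fintype.card ι ≤ (Fintype.card σ + k).choose k + (Fintype.card τ + k).choose k := by
  have hinj : Function.Injective ((momentMap k u).prod (momentMap k v)) := by
    refine (injective_iff_map_eq_zero _).mpr fun w hw => h w ?_ ?_
    · exact annihilatesMonomials_of_momentMap_eq_zero (congrArg Prod.fst hw)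
    · exact annihilatesMonomials_of_momentMap_eq_zero (congrArg Prod.snd hw)
  simpa [Module.finrank_prod, Sym.card_sym_eq_choose] using
    LinearMap.finrank_le_finrank_of_injective hinj

end

theorem eq_zero_of_sum_sum_mul_eq_zero {ι : Type*} [Fintype ι] {c : ℝ} (hc : c ≠ 0)
    {K : ι → ι → ℝ} (hK : ∀ x y, x ≠ y → K x y = c) (hKdiag : ∀ x, K x x = 0) {w : ι → ℝ}
    (hw : ∑ x, w x = 0) (hwK : ∑ x, ∑ y, w x * w y * K x y = 0) : w = 0 := by
  classical
  have hK' : ∀ x y, K x y = c - if x = y then c else 0 := fun x y => by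
    by_cases h : x = y <;> simp [h, hK, hKdiag]
  have hsq : c * ∑ x, w x ^ 2 = 0 := by
    simpa [hK', mul_sub, Finset.sum_sub_distrib, ← Finset.sum_mul, ← Finset.mul_sum, hw, sq,
      mul_comm, mul_left_comm] using hwK
  have hsq0 := (Fintype.sum_eq_zero_iff_of_nonneg fun x => sq_nonneg (w x)).mp
    ((mul_eq_zero.mp hsq).resolve_left hc)
  ext x
  exact pow_eq_zero_iff two_ne_zero |>.mp (congrFun hsq0 x)

lemma lpSumDist_pow {p a b : ℕ} (hp : p ≠ 0)
    (x y : EuclideanSpace ℝ (Fin a) × EuclideanSpace ℝ (Fin b)) :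
    lpSumDist p x y ^ p = dist x.1 y.1 ^ p + dist x.2 y.2 ^ p := by
  rw [lpSumDist, one_div, Real.rpow_inv_natCast_pow (by positivity) hp]

theorem equilateral_lp_sum_even_general (a b p : ℕ)
    (hp : 0 < p) (hpe : Even p)
    (S : Finset (EuclideanSpace ℝ (Fin a) × EuclideanSpace ℝ (Fin b)))
    (hS : ∃ d : ℝ, 0 < d ∧ ∀ x ∈ S, ∀ y ∈ S, x ≠ y → lpSumDist p x y = d) :
    S.card ≤ Nat.choose (a + p / 2) a + Nat.choose (b + p / 2) b := by
  obtain ⟨d, hd, hSd⟩ := hS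
  obtain ⟨k, rfl⟩ := hpe.two_dvd
  have hk : k ≠ 0 := by omega
  rw [Nat.mul_div_cancel_left k two_pos, Nat.choose_symm_add, Nat.choose_symm_add,
    ← Fintype.card_coe]
  refine (card_le_of_annihilatesMonomials k (fun x : S => x.1.1.ofLp) (fun x : S => x.1.2.ofLp)
    fun w hw₁ hw₂ => ?_).trans_eq (by simp)
  refine eq_zero_of_sum_sum_mul_eq_zero (pow_ne_zero (2 * k) hd.ne')
    (K := fun x y => dist x.1.1 y.1.1 ^ (2 * k) + dist x.1.2 y.1.2 ^ (2 * k))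
    (fun x y hxy => ?_) (fun x => by simp [hk]) (by simpa [monomialEval] using hw₁ 0 (by simp)) ?_
  · rw [← lpSumDist_pow (by omega), hSd x.1 x.2 y.1 y.2 (Subtype.coe_injective.ne hxy)]
  · simp only [mul_add, Finset.sum_add_distrib, sum_sum_mul_dist_pow_eq_zero hw₁,
      sum_sum_mul_dist_pow_eq_zero hw₂, add_zero]

theorem equilateral_lp_sum_even (a b p : ℕ) (ha : 0 < a) (hb : 0 < b)
    (hp : 0 < p) (hpe : Even p)
    (S : Finset (EuclideanSpace ℝ (Fin a) × EuclideanSpace ℝ (Fin b)))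
    (hS : ∃ d : ℝ, 0 < d ∧ ∀ x ∈ S, ∀ y ∈ S, x ≠ y → lpSumDist p x y = d) :
    S.card ≤ Nat.choose (a + p / 2) a + Nat.choose (b + p / 2) b :=
  equilateral_lp_sum_even_general a b p hp hpe S hS
end

section
/- For positive integers a_1, …, a_n and every positive even integer p, every equilateral set in the ℓ_p sum E^{a_1} ⊕_p ⋯ ⊕_p E^{a_n} of Euclidean spaces has cardinality at most Σ_{i=1}^n C(a_i + p/2, a_i), where C(·,·) denotes the binomial coefficient. -/
/-- The ℓ_p-sum distance on the product of `n` Euclidean spaces: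
`(∑ i, (dist (x i) (y i))^p)^(1/p)`. -/
noncomputable def lpSumDistN (p : ℕ) {n : ℕ} {a : Fin n → ℕ}
    (x y : (i : Fin n) → EuclideanSpace ℝ (Fin (a i))) : ℝ :=
  (∑ i, dist (x i) (y i) ^ p) ^ (1 / (p : ℝ))

/-!
Write `p = 2t`. Attach to each point `x` the vector `v(x)` of all monomials of degree at most `t`
in each block `x_i`. If `∑ c_x v(x) = 0`, the weights `c` annihilate all these monomials. Expanding
`‖x_i - y_i‖^{2t}` into terms `x_i^α y_i^β` with `|α| + |β| ≤ 2t`, one of `α`, `β` has degree at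
most `t`, so the quadratic form `∑ c_x c_y ‖x - y‖_p^p` vanishes. On an equilateral set of side `d`
it equals `d^p ((∑ c)^2 - ∑ c^2) = -d^p ∑ c^2` (the degree-zero moment gives `∑ c = 0`), hence
`c = 0`. So the `v(x)` are linearly independent in a space of dimension `∑ C(a_i + t, a_i)`.
-/

open Finset

section Moments

variable {ι σ : Type*} [Fintype ι]

def HasVanishingMoments (t : ℕ) (c : ι → ℝ) (u : ι → σ → ℝ) : Prop :=
  ∀ M : Multiset σ, M.card ≤ t → ∑ x, c x * (M.map (u x)).prod = 0

variable {t : ℕ} {c : ι → ℝ} {u : ι → σ → ℝ}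

theorem HasVanishingMoments.sum_mul_prod_eq_zero (hc : HasVanishingMoments t c u)
    {κ : Type*} (h : κ → σ) {T : Finset κ} (hT : #T ≤ t) :
    ∑ x, c x * ∏ r ∈ T, u x (h r) = 0 := by
  have := hc (T.val.map h) (by simpa using hT)
  simp only [Multiset.map_map] at this
  exact this

theorem HasVanishingMoments.sum_sum_mul_prod_sub_eq_zero (hc : HasVanishingMoments t c u)
    {κ : Type*} [Fintype κ] (hκ : Fintype.card κ ≤ 2 * t) (h : κ → σ) :
    ∑ x, ∑ y, c x * c y * ∏ r, (u x (h r) - u y (h r)) = 0 := by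
  classical
  have hsplit : ∑ x, ∑ y, c x * c y * ∏ r, (u x (h r) - u y (h r)) =
      ∑ T ∈ univ.powerset, (-1) ^ #T *
        ((∑ x, c x * ∏ r ∈ univ \ T, u x (h r)) * ∑ y, c y * ∏ r ∈ T, u y (h r)) := by
    simp only [sum_mul_sum]
    simp only [prod_sub, mul_sum]
    rw [sum_comm_cycle]
    refine sum_congr rfl fun T _ => sum_congr rfl fun x _ => sum_congr rfl fun y _ => by ring
  refine hsplit.trans (sum_eq_zero fun T _ => ?_)
  rcases le_or_gt #T t with hT | hT
  · rw [hc.sum_mul_prod_eq_zero h hT, mul_zero, mul_zero]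
  · have : #(univ \ T) ≤ t := by
      rw [card_sdiff_of_subset (subset_univ T), card_univ]; omega
    rw [hc.sum_mul_prod_eq_zero h this, zero_mul, mul_zero]

theorem HasVanishingMoments.sum_sum_mul_sq_dist_pow_eq_zero [Fintype σ]
    (hc : HasVanishingMoments t c u) :
    ∑ x, ∑ y, c x * c y * (∑ j, (u x j - u y j) ^ 2) ^ t = 0 := by
  -- each square contributes two factors, so every term is a product of `2t` differences
  have hexpand : ∀ x y, (∑ j, (u x j - u y j) ^ 2) ^ t =
      ∑ g : Fin t → σ, ∏ r : Fin t × Fin 2, (u x (g r.1) - u y (g r.1)) := by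
    intro x y
    simp [sum_pow', Fintype.prod_prod_type, sq]
  simp only [hexpand, mul_sum]
  rw [sum_comm_cycle]
  exact sum_eq_zero fun g _ => hc.sum_sum_mul_prod_sub_eq_zero (by simp [mul_comm]) _

/-- `none` stands for the constant coordinate `1`, so these are the monomials of degree `≤ t`. -/
def homogenizedMonomials (t : ℕ) (v : σ → ℝ) (s : Sym (Option σ) t) : ℝ :=
  ((s : Multiset (Option σ)).map fun o => o.elim 1 v).prod

theorem hasVanishingMoments_of_sum_smul_homogenizedMonomials_eq_zero
    (h : ∑ x, c x • homogenizedMonomials t (u x) = 0) : HasVanishingMoments t c u := by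
  intro M hM
  have := congrFun h (Sym.mk (M.map some + Multiset.replicate (t - M.card) none) (by
    simp only [Multiset.card_add, Multiset.card_map, Multiset.card_replicate]; omega))
  simpa [Finset.sum_apply, homogenizedMonomials, Multiset.map_map, Function.comp_def] using this

end Moments

theorem sum_sum_mul_mul_eq_of_forall_ne {ι : Type*} [Fintype ι] (c : ι → ℝ) {f : ι → ι → ℝ}
    {δ : ℝ} (hdiag : ∀ x, f x x = 0) (hoff : ∀ x y, x ≠ y → f x y = δ) :
    ∑ x, ∑ y, c x * c y * f x y = δ * ((∑ x, c x) ^ 2 - ∑ x, c x ^ 2) := by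
  classical
  have hf : ∀ x y, f x y = δ - if x = y then δ else 0 := by
    intro x y
    split_ifs with h
    · simp [h, hdiag]
    · simp [hoff x y h]
  simp only [hf, mul_sub, mul_ite, mul_zero, sum_sub_distrib, sum_ite_eq, mem_univ, if_true,
    sq, mul_sum, sum_mul]
  congr 1
  · exact sum_congr rfl fun x _ => sum_congr rfl fun y _ => by ring
  · exact sum_congr rfl fun x _ => by ring

theorem EuclideanSpace.dist_pow_two_mul {σ : Type*} [Fintype σ] (x y : EuclideanSpace ℝ σ)
    (t : ℕ) : dist x y ^ (2 * t) = (∑ j, (x j - y j) ^ 2) ^ t := by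
  simp [pow_mul, EuclideanSpace.dist_sq_eq, Real.dist_eq, sq_abs]

section Blocks

variable {ι κ : Type*} [Fintype ι] [Fintype κ] {σ : κ → Type*} [∀ k, Fintype (σ k)] {t : ℕ}

theorem linearIndependent_homogenizedMonomials_of_sum_dist_pow_eq [Nonempty κ] (ht : 0 < t)
    (u : ι → (k : κ) → EuclideanSpace ℝ (σ k)) {δ : ℝ} (hδ : δ ≠ 0)
    (hu : ∀ x y, x ≠ y → ∑ k, dist (u x k) (u y k) ^ (2 * t) = δ) :
    LinearIndependent ℝ fun x (q : Σ k, Sym (Option (σ k)) t) =>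
      homogenizedMonomials t (u x q.1) q.2 := by
  rw [Fintype.linearIndependent_iff]
  intro c hc
  have hmom : ∀ k, HasVanishingMoments t c fun x => u x k := fun k =>
    hasVanishingMoments_of_sum_smul_homogenizedMonomials_eq_zero <| funext fun s => by
      simpa [Finset.sum_apply] using congrFun hc ⟨k, s⟩
  have hsum : ∑ x, c x = 0 := by simpa using hmom (Classical.arbitrary κ) 0 (by simp)
  have hform : ∑ x, ∑ y, c x * c y * ∑ k, dist (u x k) (u y k) ^ (2 * t) = 0 := by
    simp only [mul_sum]
    rw [sum_comm_cycle]
    refine sum_eq_zero fun k _ => ?_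
    simpa only [EuclideanSpace.dist_pow_two_mul] using (hmom k).sum_sum_mul_sq_dist_pow_eq_zero
  rw [sum_sum_mul_mul_eq_of_forall_ne c (fun x => by simp [ht.ne']) hu, hsum] at hform
  have hsq : ∑ x, c x ^ 2 = 0 := by simpa [hδ] using hform
  intro x
  exact pow_eq_zero_iff two_ne_zero |>.mp <|
    (sum_eq_zero_iff_of_nonneg fun x _ => sq_nonneg (c x)).mp hsq x (mem_univ x)

theorem card_le_sum_choose_of_sum_dist_pow_eq [Nonempty κ] (ht : 0 < t)
    (u : ι → (k : κ) → EuclideanSpace ℝ (σ k)) {δ : ℝ} (hδ : δ ≠ 0)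
    (hu : ∀ x y, x ≠ y → ∑ k, dist (u x k) (u y k) ^ (2 * t) = δ) :
    Fintype.card ι ≤ ∑ k, (Fintype.card (σ k) + t).choose t := by
  classical
  simpa [Module.finrank_fintype_fun_eq_card, Fintype.card_sigma, Sym.card_sym_eq_choose] using
    (linearIndependent_homogenizedMonomials_of_sum_dist_pow_eq ht u hδ hu).fintype_card_le_finrank

end Blocks

theorem sum_dist_pow_eq_of_lpSumDistN_eq {p n : ℕ} {a : Fin n → ℕ} (hp : p ≠ 0)
    {x y : (i : Fin n) → EuclideanSpace ℝ (Fin (a i))} {d : ℝ} (h : lpSumDistN p x y = d) :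
    ∑ i, dist (x i) (y i) ^ p = d ^ p := by
  rw [← h, lpSumDistN, one_div, Real.rpow_inv_natCast_pow (by positivity) hp]

theorem equilateral_lp_sum_n_even_general (n : ℕ) (hn : 0 < n) (a : Fin n → ℕ)
    (p : ℕ) (hp : 0 < p) (hpe : Even p)
    (S : Finset ((i : Fin n) → EuclideanSpace ℝ (Fin (a i))))
    (hS : ∃ d : ℝ, 0 < d ∧ ∀ x ∈ S, ∀ y ∈ S, x ≠ y → lpSumDistN p x y = d) :
    S.card ≤ ∑ i, Nat.choose (a i + p / 2) (a i) := by
  obtain ⟨d, hd, hS⟩ := hS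
  obtain ⟨t, rfl⟩ := even_iff_two_dvd.mp hpe
  have : Nonempty (Fin n) := ⟨⟨0, hn⟩⟩
  have hcard := card_le_sum_choose_of_sum_dist_pow_eq (by omega) (fun x : S => x.1)
    (pow_ne_zero (2 * t) hd.ne')
    fun x y hxy =>
      sum_dist_pow_eq_of_lpSumDistN_eq hp.ne' (hS x x.2 y y.2 (Subtype.coe_ne_coe.mpr hxy))
  rw [Nat.mul_div_cancel_left t two_pos]
  simpa [Nat.choose_symm_add] using hcard

theorem equilateral_lp_sum_n_even (n : ℕ) (hn : 0 < n) (a : Fin n → ℕ)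
    (ha : ∀ i, 0 < a i) (p : ℕ) (hp : 0 < p) (hpe : Even p)
    (S : Finset ((i : Fin n) → EuclideanSpace ℝ (Fin (a i))))
    (hS : ∃ d : ℝ, 0 < d ∧ ∀ x ∈ S, ∀ y ∈ S, x ≠ y → lpSumDistN p x y = d) :
    S.card ≤ ∑ i, Nat.choose (a i + p / 2) (a i) :=
  equilateral_lp_sum_n_even_general n hn a p hp hpe S hS
end

section
/- (Rank Lemma) For every real symmetric n×n nonzero matrix A = (a_{ij}), the rank of A satisfies rank A ≥ (Σ_{i=1}^n a_{ii})² / (Σ_{i,j=1}^n a_{ij}²). -/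
/-!
Diagonalise `A` by the spectral theorem: the trace is the sum of the eigenvalues, `trace (A * A)`
(the sum of the squared entries) is the sum of their squares, and the rank is the number of
nonzero eigenvalues. The bound is then Cauchy–Schwarz for the nonzero eigenvalues.
-/

open Finset Matrix

theorem sq_sum_div_sum_sq_le_card_ne_zero {ι α : Type*} [Fintype ι] [Field α] [LinearOrder α]
    [IsStrictOrderedRing α] (f : ι → α) :
    (∑ i, f i) ^ 2 / ∑ i, f i ^ 2 ≤ Fintype.card {i // f i ≠ 0} := by
  classical
  have hsum : ∑ i, f i = ∑ i with f i ≠ 0, f i := (sum_filter_ne_zero _).symm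
  have hsum_sq : ∑ i, f i ^ 2 = ∑ i with f i ≠ 0, f i ^ 2 :=
    (sum_filter_of_ne fun _ _ h => (pow_ne_zero_iff two_ne_zero).mp h).symm
  rw [Fintype.card_subtype, hsum, hsum_sq]
  exact div_le_of_le_mul₀ (sum_nonneg fun i _ => sq_nonneg _) (Nat.cast_nonneg _)
    sq_sum_le_card_mul_sum_sq

theorem Matrix.IsSymm.trace_mul_self {n R : Type*} [Fintype n] [CommSemiring R]
    {A : Matrix n n R} (hA : A.IsSymm) : (A * A).trace = ∑ i, ∑ j, A i j ^ 2 := by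
  simp only [trace, diag, mul_apply, sq, hA.apply]

theorem Matrix.IsHermitian.trace_mul_self_eq_sum_sq_eigenvalues {n 𝕜 : Type*} [Fintype n]
    [DecidableEq n] [RCLike 𝕜] {A : Matrix n n 𝕜} (hA : A.IsHermitian) :
    (A * A).trace = ∑ i, (hA.eigenvalues i : 𝕜) ^ 2 := by
  conv_lhs => rw [hA.spectral_theorem]
  rw [← map_mul, Unitary.conjStarAlgAut_apply, trace_mul_cycle,
    Unitary.coe_star_mul_self, one_mul, diagonal_mul_diagonal, trace_diagonal]
  simp [sq]

theorem rank_lemma_general (n : ℕ) (A : Matrix (Fin n) (Fin n) ℝ)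
    (hsym : A.IsSymm) :
    (∑ i, A i i) ^ 2 / (∑ i, ∑ j, A i j ^ 2) ≤ (A.rank : ℝ) := by
  have hA : A.IsHermitian := isHermitian_iff_isSymm.mpr hsym
  have htrace : ∑ i, A i i = ∑ i, hA.eigenvalues i := by
    simpa [trace] using hA.trace_eq_sum_eigenvalues
  have hsum_sq : ∑ i, ∑ j, A i j ^ 2 = ∑ i, hA.eigenvalues i ^ 2 := by
    simpa [hsym.trace_mul_self] using hA.trace_mul_self_eq_sum_sq_eigenvalues
  rw [htrace, hsum_sq, hA.rank_eq_card_non_zero_eigs]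
  exact sq_sum_div_sum_sq_le_card_ne_zero _

theorem rank_lemma (n : ℕ) (A : Matrix (Fin n) (Fin n) ℝ)
    (hsym : A.IsSymm) (hA : A ≠ 0) :
    (∑ i, A i i) ^ 2 / (∑ i, ∑ j, A i j ^ 2) ≤ (A.rank : ℝ) :=
  rank_lemma_general n A hsym
end

section
/- Let A = (a_{ij}) be a real symmetric n×n matrix with a_{ii} = 1 for all i and |a_{ij}| ≤ ε for all i ≠ j, where ε ≥ 0. Then rank A ≥ n / (1 + (n−1)ε²). In particular, if ε = n^{−1/2} then rank A ≥ n/2. -/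
/-!
Let `λ₁, …, λₙ` be the eigenvalues of `A`, of which exactly `rank A` are nonzero. Cauchy–Schwarz
over the nonzero ones gives `(tr A)² = (∑ λᵢ)² ≤ rank A · ∑ λᵢ² = rank A · tr (A²)`. The unit
diagonal gives `tr A = n`, and the off-diagonal bound gives `tr (A²) = ∑ᵢⱼ aᵢⱼ aⱼᵢ ≤ n (1 + (n-1)ε²)`.
-/

open Finset

namespace Matrix

variable {n : Type*} [Fintype n] [DecidableEq n]

theorem IsHermitian.trace_mul_self_eq_sum_sq_eigenvalues_s7 {𝕜 : Type*} [RCLike 𝕜]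
    {A : Matrix n n 𝕜} (hA : A.IsHermitian) :
    (A * A).trace = ∑ i, (hA.eigenvalues i : 𝕜) ^ 2 := by
  conv_lhs => rw [hA.spectral_theorem, ← map_mul, Unitary.conjStarAlgAut_apply, trace_mul_cycle,
    Unitary.coe_star_mul_self, one_mul, diagonal_mul_diagonal, trace_diagonal]
  simp [sq]

theorem IsHermitian.sq_trace_le_rank_mul_trace_mul_self {A : Matrix n n ℝ} (hA : A.IsHermitian) :
    A.trace ^ 2 ≤ A.rank * (A * A).trace := by
  set μ := hA.eigenvalues
  set S := univ.filter (μ · ≠ 0)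
  rw [hA.trace_eq_sum_eigenvalues, hA.trace_mul_self_eq_sum_sq_eigenvalues_s7,
    hA.rank_eq_card_non_zero_eigs, Fintype.card_subtype, ← sum_filter_ne_zero]
  simp only [RCLike.ofReal_real_eq_id, id]
  calc (∑ i ∈ S, μ i) ^ 2 ≤ #S * ∑ i ∈ S, μ i ^ 2 := sq_sum_le_card_mul_sum_sq
    _ ≤ #S * ∑ i, μ i ^ 2 := by gcongr; exact subset_univ S

theorem trace_mul_self_le_of_abs_offDiag_le {A : Matrix n n ℝ} {ε : ℝ} (hdiag : ∀ i, A i i = 1)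
    (hoff : ∀ i j, i ≠ j → |A i j| ≤ ε) :
    (A * A).trace ≤ Fintype.card n * (1 + (Fintype.card n - 1) * ε ^ 2) := by
  have hrow (i : n) : ∑ j, A i j * A j i ≤ 1 + (Fintype.card n - 1) * ε ^ 2 := by
    have hprod (j : n) (hj : j ∈ univ.erase i) : A i j * A j i ≤ ε ^ 2 := by
      have hji := ne_of_mem_erase hj
      calc A i j * A j i ≤ |A i j| * |A j i| := (le_abs_self _).trans_eq (abs_mul _ _)
        _ ≤ ε * ε := mul_le_mul (hoff i j hji.symm) (hoff j i hji) (abs_nonneg _)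
            ((abs_nonneg _).trans (hoff i j hji.symm))
        _ = ε ^ 2 := (sq ε).symm
    have hcard : (#(univ.erase i) : ℝ) = Fintype.card n - 1 := by
      rw [card_erase_of_mem (mem_univ i), card_univ, Nat.cast_pred (Fintype.card_pos_iff.mpr ⟨i⟩)]
    rw [← add_sum_erase _ _ (mem_univ i), hdiag, one_mul, ← hcard]
    gcongr
    simpa using sum_le_card_nsmul _ _ _ hprod
  calc (A * A).trace = ∑ i, ∑ j, A i j * A j i := by simp [trace, mul_apply]
    _ ≤ ∑ _i : n, (1 + (Fintype.card n - 1) * ε ^ 2) := sum_le_sum fun i _ => hrow i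
    _ = _ := by simp [mul_add]

theorem card_div_le_rank_of_abs_offDiag_le {A : Matrix n n ℝ} {ε : ℝ} (hA : A.IsSymm)
    (hdiag : ∀ i, A i i = 1) (hoff : ∀ i j, i ≠ j → |A i j| ≤ ε) :
    Fintype.card n / (1 + (Fintype.card n - 1) * ε ^ 2) ≤ A.rank := by
  set N : ℝ := (Fintype.card n : ℝ)
  set D := 1 + (N - 1) * ε ^ 2
  rcases Nat.eq_zero_or_pos (Fintype.card n) with hN | hN
  · simp [N, hN]
  have hD : 1 ≤ D :=
    le_add_of_nonneg_right (mul_nonneg (sub_nonneg.mpr (Nat.one_le_cast.mpr hN)) (sq_nonneg ε))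
  have htrace : A.trace = N := by simp [trace, hdiag, N]
  have hkey : N * N ≤ N * (A.rank * D) := by
    calc N * N = A.trace ^ 2 := by rw [htrace, sq]
      _ ≤ A.rank * (A * A).trace :=
        (isHermitian_iff_isSymm.mpr hA).sq_trace_le_rank_mul_trace_mul_self
      _ ≤ A.rank * (N * D) := by gcongr; exact trace_mul_self_le_of_abs_offDiag_le hdiag hoff
      _ = N * (A.rank * D) := by ring
  rw [div_le_iff₀ (by linarith)]
  exact le_of_mul_le_mul_left hkey (Nat.cast_pos.mpr hN)

end Matrix

theorem rank_lemma_corollary_general (n : ℕ) (ε : ℝ)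
    (A : Matrix (Fin n) (Fin n) ℝ) (hsym : A.IsSymm)
    (hdiag : ∀ i, A i i = 1) (hoff : ∀ i j, i ≠ j → |A i j| ≤ ε) :
    (n : ℝ) / (1 + ((n : ℝ) - 1) * ε ^ 2) ≤ (A.rank : ℝ) ∧
      (ε = (n : ℝ) ^ (-(1 / 2) : ℝ) → (n : ℝ) / 2 ≤ (A.rank : ℝ)) := by
  have hrank := Matrix.card_div_le_rank_of_abs_offDiag_le hsym hdiag hoff
  rw [Fintype.card_fin] at hrank
  refine ⟨hrank, fun hε => ?_⟩
  rcases Nat.eq_zero_or_pos n with rfl | hn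
  · simp
  have hn' : (0 : ℝ) < n := Nat.cast_pos.mpr hn
  have hε2 : ε ^ 2 = (n : ℝ)⁻¹ := by
    rw [hε, ← Real.rpow_natCast, ← Real.rpow_mul hn'.le]
    norm_num [Real.rpow_neg_one]
  have hD : 1 + ((n : ℝ) - 1) * ε ^ 2 = 2 - (n : ℝ)⁻¹ := by
    rw [hε2]; field_simp; ring
  have hinv : (n : ℝ)⁻¹ ≤ 1 := inv_le_one_of_one_le₀ (Nat.one_le_cast.mpr hn)
  rw [hD] at hrank
  calc (n : ℝ) / 2 ≤ n / (2 - (n : ℝ)⁻¹) :=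
        div_le_div_of_nonneg_left hn'.le (by linarith) (sub_le_self _ (inv_nonneg.mpr hn'.le))
    _ ≤ A.rank := hrank

theorem rank_lemma_corollary (n : ℕ) (ε : ℝ) (hε : 0 ≤ ε)
    (A : Matrix (Fin n) (Fin n) ℝ) (hsym : A.IsSymm)
    (hdiag : ∀ i, A i i = 1) (hoff : ∀ i j, i ≠ j → |A i j| ≤ ε) :
    (n : ℝ) / (1 + ((n : ℝ) - 1) * ε ^ 2) ≤ (A.rank : ℝ) ∧
      (ε = (n : ℝ) ^ (-(1 / 2) : ℝ) → (n : ℝ) / 2 ≤ (A.rank : ℝ)) :=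
  rank_lemma_corollary_general n ε A hsym hdiag hoff
end

section
/- Let a, b be positive integers and let S be a finite equilateral set in the ℓ_∞ sum E^a ⊕_∞ E^b with common distance 1. For each u = (ũ₁, ũ₂) ∈ S, define f_u : ℝ^a × ℝ^b → ℝ by f_u(x₁, x₂) = (1 − ‖x₁ − ũ₁‖²)(1 − ‖x₂ − ũ₂‖²), where ‖·‖ is the Euclidean norm. Then the collection of functions consisting of all f_u for u ∈ S, the constant function 1, the a+b coordinate functions (x₁,x₂) ↦ (x₁)_i (1 ≤ i ≤ a) and (x₁,x₂) ↦ (x₂)_j (1 ≤ j ≤ b), and the function (x₁,x₂) ↦ ‖x₁‖², is linearly independent over ℝ. -/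
/-!
Suppose `∑ c_u f_u + d + ⟪A, x₁⟫ + ⟪B, x₂⟫ + e ‖x₁‖² = 0`. On `(s • p, t • q)` the left side is a
polynomial of degree at most two in each of `s` and `t`, and its coefficients of `s²t²`, `st²`,
`s²t` and `t²` show that `∑ c_u`, `∑ c_u u₁`, `∑ c_u u₂` and `∑ c_u ‖u₁‖²` vanish. Since `S` is
equilateral, `f_u v = δ_uv` on `S` (one factor is `1 - 1²`), so evaluating the relation at each
`v ∈ S` and summing against `c_v` gives `∑ c_v² = -∑ c_v (d + ⟪A, v₁⟫ + ⟪B, v₂⟫ + e ‖v₁‖²) = 0` by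
those moment identities. What is left is a relation among `1`, the coordinates and `‖x₁‖²`, which
is trivial.
-/

open Finset RealInnerProductSpace

lemma eq_zero_of_forall_quadratic_eq_zero {α β γ : ℝ} (h : ∀ s : ℝ, α + β * s + γ * s ^ 2 = 0) :
    α = 0 ∧ β = 0 ∧ γ = 0 := by
  have h₀ := h 0
  have h₁ := h 1
  have h₂ := h (-1)
  norm_num at h₀ h₁ h₂
  refine ⟨h₀, by linarith, by linarith⟩

lemma sum_mul_quadratic {ι : Type*} (T : Finset ι) (w a b : ι → ℝ) (r s : ℝ) :
    ∑ i ∈ T, w i * (a i + 2 * s * b i - s ^ 2 * r) =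
      ∑ i ∈ T, w i * a i + 2 * (∑ i ∈ T, w i * b i) * s + -(r * ∑ i ∈ T, w i) * s ^ 2 := by
  simp only [mul_sum, sum_mul, neg_mul, ← sum_neg_distrib, ← sum_add_distrib]
  exact sum_congr rfl fun i _ => by ring

lemma biquadratic_moments_eq_zero {ι : Type*} (T : Finset ι) (c a b p q : ι → ℝ)
    (r₁ r₂ d A B e : ℝ) (P Q : ι → ℝ → ℝ)
    (hP : ∀ i s, P i s = a i + 2 * s * p i - s ^ 2 * r₁)
    (hQ : ∀ i t, Q i t = b i + 2 * t * q i - t ^ 2 * r₂)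
    (h : ∀ s t, ∑ i ∈ T, c i * (P i s * Q i t) + d + A * s + B * t + e * s ^ 2 = 0) :
    r₁ * r₂ * ∑ i ∈ T, c i = 0 ∧ r₂ * ∑ i ∈ T, c i * p i = 0 ∧
      r₁ * ∑ i ∈ T, c i * q i = 0 ∧ r₂ * ∑ i ∈ T, c i * a i = 0 := by
  have expand : ∀ (v : ι → ℝ) t, ∑ i ∈ T, v i * Q i t =
      ∑ i ∈ T, v i * b i + 2 * (∑ i ∈ T, v i * q i) * t + -(r₂ * ∑ i ∈ T, v i) * t ^ 2 := by
    intro v t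
    simp only [hQ]
    exact sum_mul_quadratic T v b q r₂ t
  have coeffs_s : ∀ t, (∑ i ∈ T, c i * a i * Q i t + B * t + d) = 0 ∧
      2 * ∑ i ∈ T, c i * p i * Q i t + A = 0 ∧ -(r₁ * ∑ i ∈ T, c i * Q i t) + e = 0 := by
    intro t
    refine eq_zero_of_forall_quadratic_eq_zero fun s => ?_
    have hsum : ∑ i ∈ T, c i * (P i s * Q i t) =
        ∑ i ∈ T, c i * Q i t * (a i + 2 * s * p i - s ^ 2 * r₁) :=
      sum_congr rfl fun i _ => by rw [hP]; ring
    have hswap : ∀ w : ι → ℝ, ∑ i ∈ T, c i * Q i t * w i = ∑ i ∈ T, c i * w i * Q i t :=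
      fun w => sum_congr rfl fun i _ => by ring
    rw [sum_mul_quadratic, hswap, hswap] at hsum
    linear_combination h s t - hsum
  have h_a : ∑ i ∈ T, c i * a i * b i + d = 0 ∧ 2 * (∑ i ∈ T, c i * a i * q i) + B = 0 ∧
      -(r₂ * ∑ i ∈ T, c i * a i) = 0 :=
    eq_zero_of_forall_quadratic_eq_zero fun t => by rw [← (coeffs_s t).1, expand]; ring
  have h_p : 2 * ∑ i ∈ T, c i * p i * b i + A = 0 ∧ 4 * (∑ i ∈ T, c i * p i * q i) = 0 ∧
      -(2 * r₂ * ∑ i ∈ T, c i * p i) = 0 :=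
    eq_zero_of_forall_quadratic_eq_zero fun t => by rw [← (coeffs_s t).2.1, expand]; ring
  have h_c : -(r₁ * ∑ i ∈ T, c i * b i) + e = 0 ∧ -(2 * r₁ * ∑ i ∈ T, c i * q i) = 0 ∧
      r₁ * r₂ * ∑ i ∈ T, c i = 0 :=
    eq_zero_of_forall_quadratic_eq_zero fun t => by rw [← (coeffs_s t).2.2, expand]; ring
  refine ⟨h_c.2.2, by linear_combination -h_p.2.2 / 2, by linear_combination -h_c.2.1 / 2,
    by linear_combination -h_a.2.2⟩

section
variable {V W : Type*} [NormedAddCommGroup V] [NormedAddCommGroup W]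

def linftyBump (u x : V × W) : ℝ := (1 - ‖x.1 - u.1‖ ^ 2) * (1 - ‖x.2 - u.2‖ ^ 2)

lemma linftyBump_self (u : V × W) : linftyBump u u = 1 := by simp [linftyBump]

lemma linftyBump_eq_zero_of_dist_eq_one {u x : V × W} (h : dist u x = 1) :
    linftyBump u x = 0 := by
  rw [Prod.dist_eq] at h
  rw [linftyBump, ← dist_eq_norm, ← dist_eq_norm, dist_comm x.1, dist_comm x.2]
  rcases max_choice (dist u.1 x.1) (dist u.2 x.2) with h' | h' <;> rw [h'] at h <;> simp [h]

lemma sum_mul_linftyBump_of_pairwise_dist_eq_one {ι : Type*} [Fintype ι] {u : ι → V × W}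
    (hu : Pairwise fun i j => dist (u i) (u j) = 1) (c : ι → ℝ) (j : ι) :
    ∑ i, c i * linftyBump (u i) (u j) = c j := by
  rw [Fintype.sum_eq_single j fun i hij => by
    rw [linftyBump_eq_zero_of_dist_eq_one (hu hij), mul_zero], linftyBump_self, mul_one]

variable [InnerProductSpace ℝ V] [InnerProductSpace ℝ W]

lemma one_sub_norm_smul_sub_sq (s : ℝ) (p v : V) :
    1 - ‖s • p - v‖ ^ 2 = (1 - ‖v‖ ^ 2) + 2 * s * ⟪p, v⟫ - s ^ 2 * ‖p‖ ^ 2 := by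
  rw [norm_sub_sq_real, norm_smul, real_inner_smul_left, mul_pow, Real.norm_eq_abs, sq_abs]
  ring

lemma linftyBump_moments_eq_zero {ι : Type*} (T : Finset ι) (u : ι → V × W) (c : ι → ℝ) (d e : ℝ)
    (A : V) (B : W)
    (h : ∀ x : V × W,
      ∑ i ∈ T, c i * linftyBump (u i) x + d + ⟪A, x.1⟫ + ⟪B, x.2⟫ + e * ‖x.1‖ ^ 2 = 0)
    (p : V) (q : W) :
    ‖p‖ ^ 2 * ‖q‖ ^ 2 * ∑ i ∈ T, c i = 0 ∧ ‖q‖ ^ 2 * ∑ i ∈ T, c i * ⟪p, (u i).1⟫ = 0 ∧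
      ‖p‖ ^ 2 * ∑ i ∈ T, c i * ⟪q, (u i).2⟫ = 0 ∧
      ‖q‖ ^ 2 * ∑ i ∈ T, c i * (1 - ‖(u i).1‖ ^ 2) = 0 :=
  biquadratic_moments_eq_zero T c _ _ _ _ _ _ d ⟪A, p⟫ ⟪B, q⟫ (e * ‖p‖ ^ 2)
    (fun i s => 1 - ‖s • p - (u i).1‖ ^ 2) (fun i t => 1 - ‖t • q - (u i).2‖ ^ 2)
    (fun i s => one_sub_norm_smul_sub_sq s p (u i).1)
    (fun i t => one_sub_norm_smul_sub_sq t q (u i).2) fun s t => by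
      have := h (s • p, t • q)
      simp only [linftyBump, inner_smul_right, norm_smul, mul_pow, Real.norm_eq_abs, sq_abs] at this
      linear_combination this

lemma eq_zero_of_forall_affine_add_norm_sq_eq_zero [Nontrivial V] {d e : ℝ} {A : V} {B : W}
    (h : ∀ x : V × W, d + ⟪A, x.1⟫ + ⟪B, x.2⟫ + e * ‖x.1‖ ^ 2 = 0) :
    d = 0 ∧ A = 0 ∧ B = 0 ∧ e = 0 := by
  have hd : d = 0 := by simpa using h 0
  have hA : A = 0 := by
    have h₁ := h (A, 0)
    have h₂ := h (-A, 0)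
    simp only [hd, inner_neg_right, norm_neg, inner_zero_right, real_inner_self_eq_norm_sq] at h₁ h₂
    exact norm_eq_zero.mp (by nlinarith [norm_nonneg A])
  have hB : B = 0 := by simpa [hd, real_inner_self_eq_norm_sq] using h (0, B)
  obtain ⟨p, hp⟩ := exists_ne (0 : V)
  have he : e * ‖p‖ ^ 2 = 0 := by simpa [hd, hA] using h (p, 0)
  exact ⟨hd, hA, hB, (mul_eq_zero.mp he).resolve_right (by positivity)⟩

lemma eq_zero_of_forall_sum_linftyBump_add_eq_zero [Nontrivial V] [Nontrivial W]
    {ι : Type*} [Fintype ι] {u : ι → V × W} (hu : Pairwise fun i j => dist (u i) (u j) = 1)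
    {c : ι → ℝ} {d e : ℝ} {A : V} {B : W}
    (h : ∀ x : V × W,
      ∑ i, c i * linftyBump (u i) x + d + ⟪A, x.1⟫ + ⟪B, x.2⟫ + e * ‖x.1‖ ^ 2 = 0) :
    c = 0 := by
  obtain ⟨p, hp₀⟩ := exists_ne (0 : V)
  obtain ⟨q, hq₀⟩ := exists_ne (0 : W)
  have hp : ‖p‖ ^ 2 ≠ 0 := by positivity
  have hq : ‖q‖ ^ 2 ≠ 0 := by positivity
  have moments := linftyBump_moments_eq_zero univ u c d e A B h
  have m_one : ∑ i, c i = 0 := by simpa [hp, hq] using (moments p q).1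
  have m_A : ∑ i, c i * ⟪A, (u i).1⟫ = 0 := by simpa [hq] using (moments A q).2.1
  have m_B : ∑ i, c i * ⟪B, (u i).2⟫ = 0 := by simpa [hp] using (moments p B).2.2.1
  have m_sq : ∑ i, c i * ‖(u i).1‖ ^ 2 = 0 := by
    have := (moments p q).2.2.2
    simp only [hq, mul_one_sub, sum_sub_distrib, m_one, false_or, mul_eq_zero] at this
    linarith
  have at_points : ∀ j, c j * c j =
      -(c j * d + c j * ⟪A, (u j).1⟫ + c j * ⟪B, (u j).2⟫ + e * (c j * ‖(u j).1‖ ^ 2)) := by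
    intro j
    have := h (u j)
    rw [sum_mul_linftyBump_of_pairwise_dist_eq_one hu] at this
    linear_combination c j * this
  have sum_sq : ∑ j, c j * c j = 0 := by
    simp only [at_points, sum_neg_distrib, sum_add_distrib, ← sum_mul, ← mul_sum, m_one, m_A, m_B,
      m_sq]
    simp
  funext j
  exact (sum_mul_self_eq_zero_iff univ c).mp sum_sq j (mem_univ j)

end

theorem linearIndependent_linfty_functions (a b : ℕ) (ha : 0 < a) (hb : 0 < b)
    (S : Finset (EuclideanSpace ℝ (Fin a) × EuclideanSpace ℝ (Fin b)))
    (hS : ∀ u ∈ S, ∀ v ∈ S, u ≠ v → dist u v = 1) :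
    LinearIndependent ℝ
      (fun idx : ↥S ⊕ (Unit ⊕ (Fin a ⊕ (Fin b ⊕ Unit))) =>
        match idx with
        | Sum.inl u => fun x : EuclideanSpace ℝ (Fin a) × EuclideanSpace ℝ (Fin b) =>
            (1 - ‖x.1 - (u : EuclideanSpace ℝ (Fin a) × EuclideanSpace ℝ (Fin b)).1‖ ^ 2) *
              (1 - ‖x.2 - (u : EuclideanSpace ℝ (Fin a) × EuclideanSpace ℝ (Fin b)).2‖ ^ 2)
        | Sum.inr (Sum.inl _) => fun _ => (1 : ℝ)
        | Sum.inr (Sum.inr (Sum.inl i)) => fun x => x.1 i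
        | Sum.inr (Sum.inr (Sum.inr (Sum.inl j))) => fun x => x.2 j
        | Sum.inr (Sum.inr (Sum.inr (Sum.inr _))) => fun x => ‖x.1‖ ^ 2) := by
  have : NeZero a := ⟨ha.ne'⟩
  have : NeZero b := ⟨hb.ne'⟩
  rw [Fintype.linearIndependent_iff]
  intro g hg
  set A := WithLp.toLp 2 fun i => g (.inr (.inr (.inl i)))
  set B := WithLp.toLp 2 fun j => g (.inr (.inr (.inr (.inl j))))
  have relation : ∀ x, ∑ u : S, g (.inl u) * linftyBump u.val x + g (.inr (.inl ())) +
      ⟪A, x.1⟫ + ⟪B, x.2⟫ + g (.inr (.inr (.inr (.inr ())))) * ‖x.1‖ ^ 2 = 0 := by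
    intro x
    have := congrFun hg x
    simp only [Fintype.sum_sum_type, Finset.sum_apply, Pi.smul_apply, smul_eq_mul,
      Pi.zero_apply, univ_unique, sum_singleton, PUnit.default_eq_unit] at this
    simp only [linftyBump, A, B, PiLp.inner_apply, Real.inner_apply]
    linear_combination this
  have hu : Pairwise fun u v : S => dist u.val v.val = 1 :=
    fun u v huv => hS u u.2 v v.2 (Subtype.coe_ne_coe.mpr huv)
  have hc : ∀ u, g (.inl u) = 0 :=
    congrFun (eq_zero_of_forall_sum_linftyBump_add_eq_zero hu relation)
  have affine : ∀ x : EuclideanSpace ℝ (Fin a) × EuclideanSpace ℝ (Fin b),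
      g (.inr (.inl ())) + ⟪A, x.1⟫ + ⟪B, x.2⟫ + g (.inr (.inr (.inr (.inr ())))) * ‖x.1‖ ^ 2 = 0 :=
    fun x => by
    simpa only [hc, zero_mul, sum_const_zero, zero_add] using relation x
  obtain ⟨hd, hA, hB, he⟩ := eq_zero_of_forall_affine_add_norm_sq_eq_zero affine
  rintro (u | ⟨⟩ | i | j | ⟨⟩)
  · exact hc u
  · exact hd
  · exact congrArg (· i) hA
  · exact congrArg (· j) hB
  · exact he
end
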